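/- arXiv:1712.03801 — 14 statements merged into one kernel-verified Lean document; each statement's English description precedes it below -/
import Mathlib

section
/- Let G be a nontrivial group (there exists g ∈ G with g ≠ 1). Then the set D = {v : Fin 2 → G | v 0 = 1 ∨ v 1 = 1} is not an algebraic set over G; that is, there is no subset T of the free group FreeGroup (Fin 2) such that D = {v : Fin 2 → G | ∀ w ∈ T, FreeGroup.lift v w = 1}. (Hence no nontrivial group is an equational domain in the variety of all groups.) -/
/-!
If the union of the axes were `V(T)`, it would contain `(g, 1)` and `(1, g)`. Both points take
values in the abelian subgroup `⟨g⟩`, on which evaluating a word is multiplicative in the point, so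
their product `(g, g)` would solve `T` as well, yet it lies on neither axis when `g ≠ 1`.
-/

namespace FreeGroup

variable {α G : Type*} [Group G]

theorem lift_mul {A : Type*} [CommGroup A] (u v : α → A) :
    lift (u * v) = lift u * lift v :=
  ext_hom _ _ fun a => by simp

theorem lift_comp {K : Type*} [Group K] (f : G →* K) (u : α → G) :
    lift (f ∘ u) = f.comp (lift u) :=
  ext_hom _ _ fun a => by simp

open scoped IsMulCommutative in
theorem lift_mul_apply_of_forall_mem (H : Subgroup G) [IsMulCommutative H] {u v : α → G}
    (hu : ∀ i, u i ∈ H) (hv : ∀ i, v i ∈ H) (w : FreeGroup α) :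
    lift (u * v) w = lift u w * lift v w := by
  let u' : α → H := fun i => ⟨u i, hu i⟩
  let v' : α → H := fun i => ⟨v i, hv i⟩
  have huv : u * v = H.subtype ∘ (u' * v') := rfl
  have hu' : u = H.subtype ∘ u' := rfl
  have hv' : v = H.subtype ∘ v' := rfl
  rw [huv, hu', hv', lift_comp, lift_comp, lift_comp, lift_mul]
  exact _root_.map_mul H.subtype _ _

variable (G) in
def solutionSet (T : Set (FreeGroup α)) : Set (α → G) :=
  {v | ∀ w ∈ T, lift v w = 1}

theorem mul_mem_solutionSet (H : Subgroup G) [IsMulCommutative H] {T : Set (FreeGroup α)}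
    {u v : α → G} (hu : u ∈ solutionSet G T) (hv : v ∈ solutionSet G T)
    (huH : ∀ i, u i ∈ H) (hvH : ∀ i, v i ∈ H) : u * v ∈ solutionSet G T := fun w hw => by
  rw [lift_mul_apply_of_forall_mem H huH hvH, hu w hw, hv w hw, one_mul]

end FreeGroup

open FreeGroup

theorem mulSingle_zero_mul_mulSingle_one {G : Type*} [Group G] (g : G) :
    Pi.mulSingle (0 : Fin 2) g * Pi.mulSingle 1 g = fun _ => g := by
  ext i
  fin_cases i <;> simp

theorem union_of_axes_not_algebraic_over_nontrivial_group
    (G : Type*) [Group G] (hG : ∃ g : G, g ≠ 1) :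
    ¬ ∃ T : Set (FreeGroup (Fin 2)),
      {v : Fin 2 → G | v 0 = 1 ∨ v 1 = 1} =
        {v : Fin 2 → G | ∀ w ∈ T, FreeGroup.lift v w = 1} := by
  rintro ⟨T, hT⟩
  obtain ⟨g, hg⟩ := hG
  have haxes : {v : Fin 2 → G | v 0 = 1 ∨ v 1 = 1} = solutionSet G T := hT
  have h0 : Pi.mulSingle (0 : Fin 2) g ∈ solutionSet G T := haxes ▸ Or.inr (by simp)
  have h1 : Pi.mulSingle (1 : Fin 2) g ∈ solutionSet G T := haxes ▸ Or.inl (by simp)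
  have hmem (i j : Fin 2) : (Pi.mulSingle i g : Fin 2 → G) j ∈ Subgroup.zpowers g := by
    rw [Pi.mulSingle_apply]
    split_ifs
    exacts [Subgroup.mem_zpowers g, one_mem _]
  have hdiag := mul_mem_solutionSet (Subgroup.zpowers g) h0 h1 (hmem 0) (hmem 1)
  rw [← haxes, mulSingle_zero_mul_mulSingle_one] at hdiag
  exact hg (hdiag.elim id id)
end

section
/- Let K be a commutative ring and L a nontrivial Lie algebra over K (there exists x ∈ L with x ≠ 0). Then the set D = {v : Fin 2 → L | v 0 = 0 ∨ v 1 = 0} is not an algebraic set over L; that is, there is no subset T of the free Lie algebra FreeLieAlgebra K (Fin 2) with D = {v : Fin 2 → L | ∀ f ∈ T, FreeLieAlgebra.lift K v f = 0}. (Hence no nontrivial Lie algebra is an equational domain in the variety of all Lie algebras over K.) -/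
/-!
Fix `x ≠ 0` in `L`. Since `a ↦ a • x` is a Lie algebra map from the abelian Lie algebra `K`,
evaluating a Lie polynomial at `(a₁ • x, …, aₙ • x)` gives `p(a₁, …, aₙ) • x`, where `p(a)` is the
value in `K`; and into an abelian Lie algebra the value of a Lie polynomial is additive in the
point. So every algebraic set meets the "line" `{a • x}ⁿ` in a set closed under addition. The union
of the axes contains `(x, 0)` and `(0, x)` but not their sum `(x, x)`.
-/

section

variable {R L : Type*} [CommRing R] [LieRing L] [LieAlgebra R L]

attribute [local instance 100] LieRing.ofAssociativeRing

def LieHom.smulRight (x : L) : R →ₗ⁅R⁆ L :=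
  { LinearMap.smulRight LinearMap.id x with
    map_lie' := fun {a b} => by
      simp [LieRing.of_associative_ring_bracket, sub_smul, mul_smul, smul_comm a b] }

end

namespace FreeLieAlgebra

variable {R X L M : Type*} [CommRing R] [LieRing L] [LieAlgebra R L]

def zeroLocus (T : Set (FreeLieAlgebra R X)) : Set (X → L) :=
  {v | ∀ f ∈ T, lift R v f = 0}

theorem lift_comp_apply [LieRing M] [LieAlgebra R M] (φ : L →ₗ⁅R⁆ M) (v : X → L)
    (f : FreeLieAlgebra R X) : lift R (φ ∘ v) f = φ (lift R v f) := by
  rw [← LieHom.comp_apply]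
  congr 1
  exact hom_ext fun i => by simp

theorem lift_add_apply [IsLieAbelian L] (v w : X → L) (f : FreeLieAlgebra R X) :
    lift R (v + w) f = lift R v f + lift R w f := by
  let F : FreeLieAlgebra R X →ₗ⁅R⁆ L :=
    { (lift R v).toLinearMap + (lift R w).toLinearMap with
      map_lie' := by simp [trivial_lie_zero] }
  have : lift R (v + w) = F := hom_ext fun i => by
    change _ = lift R v (of R i) + lift R w (of R i)
    simp
  rw [this]
  rfl

attribute [local instance 100] LieRing.ofAssociativeRing

theorem lift_smul_apply (v : X → R) (x : L) (f : FreeLieAlgebra R X) :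
    lift R (fun i => v i • x) f = lift R v f • x :=
  lift_comp_apply (LieHom.smulRight x) v f

theorem add_smul_mem_zeroLocus {T : Set (FreeLieAlgebra R X)} {v w : X → R} {x : L}
    (hv : (fun i => v i • x) ∈ zeroLocus T) (hw : (fun i => w i • x) ∈ zeroLocus T) :
    (fun i => (v + w) i • x) ∈ zeroLocus T := by
  have : IsLieAbelian R := isMulCommutative_iff_isLieAbelian.mp inferInstance
  intro f hf
  have hvf := hv f hf
  have hwf := hw f hf
  rw [lift_smul_apply] at hvf hwf ⊢
  rw [lift_add_apply, add_smul, hvf, hwf, add_zero]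

end FreeLieAlgebra

theorem union_of_axes_not_algebraic_over_nontrivial_lie_algebra
    (K : Type*) (L : Type*) [CommRing K] [LieRing L] [LieAlgebra K L]
    (hL : ∃ x : L, x ≠ 0) :
    ¬ ∃ T : Set (FreeLieAlgebra K (Fin 2)),
      {v : Fin 2 → L | v 0 = 0 ∨ v 1 = 0} =
        {v : Fin 2 → L | ∀ f ∈ T, FreeLieAlgebra.lift K v f = 0} := by
  rintro ⟨T, hT⟩
  obtain ⟨x, hx⟩ := hL
  change _ = FreeLieAlgebra.zeroLocus T at hT
  have hx0 : (fun i => (![1, 0] : Fin 2 → K) i • x) ∈ FreeLieAlgebra.zeroLocus T :=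
    hT ▸ Or.inr (by simp)
  have h0x : (fun i => (![0, 1] : Fin 2 → K) i • x) ∈ FreeLieAlgebra.zeroLocus T :=
    hT ▸ Or.inl (by simp)
  have hxx := FreeLieAlgebra.add_smul_mem_zeroLocus hx0 h0x
  rw [← hT] at hxx
  exact hx (by simpa using hxx)
end

section
/- Let K be a commutative ring and M a nontrivial K-module (there exists x ∈ M with x ≠ 0). Then the set D = {v : Fin 2 → M | v 0 = 0 ∨ v 1 = 0} is not an algebraic set over M; that is, there is no subset T of the free module (Fin 2 →₀ K) such that D = {v : Fin 2 → M | ∀ f ∈ T, (∑ i, f i • v i) = 0}. (Hence no nontrivial module is an equational domain in the variety of all K-modules.) -/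
/-!
Every algebraic set `V(T)` is an intersection of kernels of linear maps, hence a submodule and in
particular closed under addition. For `x ≠ 0` the union of the two axes contains `(x, 0)` and
`(0, x)` but not their sum `(x, x)`, so it is not of the form `V(T)`.
-/

section ZeroLocus

variable {K ι : Type*} [CommSemiring K] [Fintype ι]

/-- The algebraic set `V(T)`. -/
def zeroLocus (M : Type*) [AddCommMonoid M] [Module K M] (T : Set (ι →₀ K)) :
    Submodule K (ι → M) where
  carrier := {v | ∀ f ∈ T, ∑ i, f i • v i = 0}
  zero_mem' := by simp
  add_mem' {v w} hv hw f hf := by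
    simp only [Pi.add_apply, smul_add, Finset.sum_add_distrib, hv f hf, hw f hf, add_zero]
  smul_mem' c v hv f hf := by
    simp only [Pi.smul_apply, smul_comm (f _) c, ← Finset.smul_sum, hv f hf, smul_zero]

end ZeroLocus

theorem AddSubmonoid.coe_ne_union_axes {M : Type*} [AddMonoid M] {x : M} (hx : x ≠ 0)
    (S : AddSubmonoid (Fin 2 → M)) : (S : Set (Fin 2 → M)) ≠ {v | v 0 = 0 ∨ v 1 = 0} := by
  intro hS
  have h₀ : Pi.single 0 x ∈ S := by simp [← SetLike.mem_coe, hS]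
  have h₁ : Pi.single 1 x ∈ S := by simp [← SetLike.mem_coe, hS]
  have hsum : Pi.single 0 x + Pi.single 1 x ∈ (S : Set (Fin 2 → M)) := S.add_mem h₀ h₁
  simp [hS, hx] at hsum

theorem union_of_axes_not_algebraic_over_nontrivial_module
    (K : Type*) (M : Type*) [CommRing K] [AddCommGroup M] [Module K M]
    (hM : ∃ x : M, x ≠ 0) :
    ¬ ∃ T : Set (Fin 2 →₀ K),
      {v : Fin 2 → M | v 0 = 0 ∨ v 1 = 0} =
        {v : Fin 2 → M | ∀ f ∈ T, ∑ i, f i • v i = 0} := by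
  rintro ⟨T, hT⟩
  obtain ⟨x, hx⟩ := hM
  exact (zeroLocus M T).toAddSubmonoid.coe_ne_union_axes hx hT.symm
end

section
/- Let A be an associative ring. Then A is an equational domain — i.e., for every n : ℕ and all subsets T₁, T₂ of the free ring FreeRing (Fin n), there exists a subset T of FreeRing (Fin n) with V(T₁) ∪ V(T₂) = V(T) — if and only if A satisfies: for all x y ∈ A, if x*y = 0 and y*x = 0 then x = 0 or y = 0. -/
/-!
If `x * y = 0 = y * x`, evaluation at `(x, y)` splits as `w(x, y) = w(x, 0) + w(0, y) - w(0, 0)`: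
`w(x, 0) - w(0, 0)` lies in the non-unital subring generated by `x`, `w(0, y) - w(0, 0)` in the one
generated by `y`, and these two subrings annihilate each other. So every algebraic set containing
both coordinate axes of `A²` contains `(x, y)`, and `V(X₀) ∪ V(X₁)` can only be algebraic if
`x = 0` or `y = 0`. Conversely, when no such pairs exist, `V(T₁) ∪ V(T₂) = V(T₁ T₂ ∪ T₂ T₁)`.
-/

namespace NonUnitalSubring

variable {A : Type*} [NonUnitalRing A]

theorem mul_eq_zero_of_mem_closure {s t : Set A} (h : ∀ a ∈ s, ∀ b ∈ t, a * b = 0) {a b : A}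
    (ha : a ∈ closure s) (hb : b ∈ closure t) : a * b = 0 := by
  induction hb using closure_induction with
  | mem b hb =>
    induction ha using closure_induction with
    | mem a ha => exact h a ha b hb
    | zero => exact zero_mul b
    | add x y _ _ hx hy => rw [add_mul, hx, hy, add_zero]
    | neg x _ hx => rw [neg_mul, hx, neg_zero]
    | mul x y _ _ _ hy => rw [mul_assoc, hy, mul_zero]
  | zero => exact mul_zero a
  | add x y _ _ hx hy => rw [mul_add, hx, hy, add_zero]
  | neg x _ hx => rw [mul_neg, hx, neg_zero]
  | mul x y _ _ hx _ => rw [← mul_assoc, hx, zero_mul]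

end NonUnitalSubring

namespace FreeRing

variable {σ A : Type*} [Ring A]

theorem lift_zero_apply (w : FreeRing σ) : lift (0 : σ → A) w = (lift (0 : σ → ℤ) w : A) := by
  have h : (Int.castRingHom A).comp (lift (0 : σ → ℤ)) = lift 0 := by ext; simp
  exact (RingHom.congr_fun h w).symm

theorem lift_sub_lift_zero_mem_closure (v : σ → A) (w : FreeRing σ) :
    lift v w - lift 0 w ∈ NonUnitalSubring.closure (Set.range v) := by
  induction w with
  | hn1 => simp
  | hb i => simpa using NonUnitalSubring.subset_closure (Set.mem_range_self i)
  | ha u w hu hw =>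
    simpa only [map_add, add_sub_add_comm] using add_mem hu hw
  | hm u w hu hw =>
    have h_decomp : lift v (u * w) - lift 0 (u * w) =
        (lift v u - lift 0 u) * (lift v w - lift 0 w) +
          (lift v u - lift 0 u) * lift 0 w + lift 0 u * (lift v w - lift 0 w) := by
      simp only [map_mul]; noncomm_ring
    rw [h_decomp]
    refine add_mem (add_mem (mul_mem hu hw) ?_) ?_
    · rw [lift_zero_apply w, ← zsmul_eq_mul']
      exact zsmul_mem hu _
    · rw [lift_zero_apply u, ← zsmul_eq_mul]
      exact zsmul_mem hw _

theorem lift_add_of_mul_eq_zero {v₁ v₂ : σ → A} (h₁₂ : ∀ i j, v₁ i * v₂ j = 0)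
    (h₂₁ : ∀ i j, v₂ j * v₁ i = 0) (w : FreeRing σ) :
    lift (v₁ + v₂) w = lift v₁ w + lift v₂ w - lift 0 w := by
  have orth : ∀ u w : FreeRing σ, (lift v₁ u - lift 0 u) * (lift v₂ w - lift 0 w) = 0 ∧
      (lift v₂ w - lift 0 w) * (lift v₁ u - lift 0 u) = 0 := by
    intro u w
    have hu := lift_sub_lift_zero_mem_closure v₁ u
    have hw := lift_sub_lift_zero_mem_closure v₂ w
    constructor
    · refine NonUnitalSubring.mul_eq_zero_of_mem_closure ?_ hu hw
      rintro _ ⟨i, rfl⟩ _ ⟨j, rfl⟩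
      exact h₁₂ i j
    · refine NonUnitalSubring.mul_eq_zero_of_mem_closure ?_ hw hu
      rintro _ ⟨j, rfl⟩ _ ⟨i, rfl⟩
      exact h₂₁ i j
  induction w with
  | hn1 => simp
  | hb i => simp
  | ha u w hu hw => simp only [map_add, hu, hw]; abel
  | hm u w hu hw =>
    have expand : ∀ p q r p' q' r' : A, (p + q - r) * (p' + q' - r') =
        p * p' + q * q' - r * r' + ((p - r) * (q' - r') + (q - r) * (p' - r')) := by
      intros; noncomm_ring
    rw [map_mul, map_mul, map_mul, map_mul, hu, hw, expand, (orth u w).1, (orth w u).2]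
    simp

variable (A) in
def zeroLocus (T : Set (FreeRing σ)) : Set (σ → A) :=
  {v | ∀ w ∈ T, lift v w = 0}

open Pointwise in
theorem zeroLocus_union_eq_zeroLocus_mul
    (h : ∀ x y : A, x * y = 0 → y * x = 0 → x = 0 ∨ y = 0) (T₁ T₂ : Set (FreeRing σ)) :
    zeroLocus A T₁ ∪ zeroLocus A T₂ = zeroLocus A (T₁ * T₂ ∪ T₂ * T₁) := by
  ext v
  constructor
  · rintro (hv | hv) w (⟨w₁, h₁, w₂, h₂, rfl⟩ | ⟨w₂, h₂, w₁, h₁, rfl⟩) <;>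
      first | simp [hv _ h₁] | simp [hv _ h₂]
  · intro hv
    by_contra hc
    simp only [Set.mem_union, zeroLocus, Set.mem_ofPred, not_or, not_forall] at hc
    obtain ⟨⟨w₁, h₁, hw₁⟩, ⟨w₂, h₂, hw₂⟩⟩ := hc
    have h₁₂ := hv _ (Or.inl (Set.mul_mem_mul h₁ h₂))
    have h₂₁ := hv _ (Or.inr (Set.mul_mem_mul h₂ h₁))
    rw [map_mul] at h₁₂ h₂₁
    exact (h _ _ h₁₂ h₂₁).elim hw₁ hw₂

theorem eq_zero_or_eq_zero_of_zeroLocus_union {T : Set (FreeRing (Fin 2))}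
    (hT : zeroLocus A {of 0} ∪ zeroLocus A {of 1} = zeroLocus A T) {x y : A}
    (hxy : x * y = 0) (hyx : y * x = 0) : x = 0 ∨ y = 0 := by
  have h_axes : ∀ v : Fin 2 → A, v 0 = 0 ∨ v 1 = 0 → v ∈ zeroLocus A T := by
    rintro v (h | h) <;> rw [← hT] <;> simp [zeroLocus, h]
  have h_orth₁ : ∀ i j, ![x, 0] i * ![0, y] j = 0 := by
    intro i j; fin_cases i <;> fin_cases j <;> simp [hxy]
  have h_orth₂ : ∀ i j, ![0, y] j * ![x, 0] i = 0 := by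
    intro i j; fin_cases i <;> fin_cases j <;> simp [hyx]
  have h_mem : ![x, y] ∈ zeroLocus A T := by
    intro w hw
    have h_split : ![x, y] = ![x, 0] + ![0, y] := by simp
    rw [h_split, lift_add_of_mul_eq_zero h_orth₁ h_orth₂, h_axes _ (Or.inr rfl) w hw,
      h_axes _ (Or.inl rfl) w hw, h_axes 0 (Or.inl rfl) w hw, add_zero, sub_zero]
  rw [← hT] at h_mem
  rcases h_mem with h | h
  · exact Or.inl (by simpa using h _ rfl)
  · exact Or.inr (by simpa using h _ rfl)

end FreeRing

theorem ring_equational_domain_iff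
    (A : Type*) [Ring A] :
    (∀ (n : ℕ) (T₁ T₂ : Set (FreeRing (Fin n))), ∃ T : Set (FreeRing (Fin n)),
      ({v : Fin n → A | ∀ w ∈ T₁, FreeRing.lift v w = 0} ∪
        {v : Fin n → A | ∀ w ∈ T₂, FreeRing.lift v w = 0}) =
        {v : Fin n → A | ∀ w ∈ T, FreeRing.lift v w = 0}) ↔
    (∀ x y : A, x * y = 0 → y * x = 0 → x = 0 ∨ y = 0) := by
  constructor
  · intro H x y hxy hyx
    obtain ⟨T, hT⟩ := H 2 {FreeRing.of 0} {FreeRing.of 1}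
    exact FreeRing.eq_zero_or_eq_zero_of_zeroLocus_union hT hxy hyx
  · intro h n T₁ T₂
    exact ⟨_, FreeRing.zeroLocus_union_eq_zeroLocus_mul h T₁ T₂⟩
end

section
/- Let A be an associative ring satisfying: for all x y ∈ A, if x*y = 0 and y*x = 0 then x = 0 or y = 0. Then for every n : ℕ and any two two-sided ideals I₁, I₂ of FreeRing (Fin n), the union of their algebraic sets equals the algebraic set of their intersection: V(I₁) ∪ V(I₂) = V(I₁ ⊓ I₂). -/
theorem TwoSidedIdeal.forall_map_eq_zero_or_of_forall_mem_inf {R A : Type*} [Ring R] [Ring A]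
    (h : ∀ x y : A, x * y = 0 → y * x = 0 → x = 0 ∨ y = 0) (f : R →+* A)
    {I J : TwoSidedIdeal R} (hf : ∀ w ∈ I ⊓ J, f w = 0) :
    (∀ a ∈ I, f a = 0) ∨ (∀ b ∈ J, f b = 0) := by
  by_contra! hc
  obtain ⟨⟨a, ha, hfa⟩, ⟨b, hb, hfb⟩⟩ := hc
  have hab : f a * f b = 0 := by
    rw [← map_mul]
    exact hf _ ⟨I.mul_mem_right _ _ ha, J.mul_mem_left _ _ hb⟩
  have hba : f b * f a = 0 := by
    rw [← map_mul]
    exact hf _ ⟨I.mul_mem_left _ _ ha, J.mul_mem_right _ _ hb⟩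
  exact (h _ _ hab hba).elim hfa hfb

theorem union_algebraic_sets_eq_algebraic_set_of_inf
    (A : Type*) [Ring A]
    (h : ∀ x y : A, x * y = 0 → y * x = 0 → x = 0 ∨ y = 0)
    (n : ℕ) (I₁ I₂ : TwoSidedIdeal (FreeRing (Fin n))) :
    ({v : Fin n → A | ∀ w ∈ I₁, FreeRing.lift v w = 0} ∪
      {v : Fin n → A | ∀ w ∈ I₂, FreeRing.lift v w = 0}) =
      {v : Fin n → A | ∀ w ∈ I₁ ⊓ I₂, FreeRing.lift v w = 0} := by
  ext v
  constructor
  · rintro (hv | hv) w hw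
    exacts [hv w hw.1, hv w hw.2]
  · exact TwoSidedIdeal.forall_map_eq_zero_or_of_forall_mem_inf h (FreeRing.lift v)
end

section
/- Let A be an associative ring containing a nonzero element a with a*a = 0. Then the set D = {v : Fin 2 → A | v 0 = 0 ∨ v 1 = 0} is not an algebraic set over A; that is, there is no subset T of FreeRing (Fin 2) with D = {v : Fin 2 → A | ∀ w ∈ T, FreeRing.lift v w = 0}. (Hence such a ring is not an equational domain.) -/
/-!
If `v i * v j = 0` for all `i, j`, evaluating a noncommutative polynomial at `v` factors through
the square-zero extension `ℤ ⊕ ℤ^(ι)`, so `w(v) = c + ∑ mᵢ • vᵢ` with `c, m` depending only on `w`.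
On such points every polynomial is thus affine in `v`. The zero set of any `T` containing the
points `0`, `(a, 0)` and `(0, a)` of the union of axes therefore also contains `(a, a)`,
which is not on it.
-/

namespace FreeRing

variable {ι A : Type*} [Ring A]

noncomputable def toTrivSqZeroExt : FreeRing ι →+* TrivSqZeroExt ℤ (ι →₀ ℤ) :=
  lift fun i => TrivSqZeroExt.inr (Finsupp.single i 1)

theorem linearCombination_mul_linearCombination_eq_zero {v : ι → A} (hv : ∀ i j, v i * v j = 0)
    (x y : ι →₀ ℤ) : Finsupp.linearCombination ℤ v x * Finsupp.linearCombination ℤ v y = 0 := by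
  simp only [Finsupp.linearCombination_apply, Finsupp.sum, Finset.sum_mul, Finset.mul_sum,
    smul_mul_smul_comm, hv, smul_zero, Finset.sum_const_zero]

theorem lift_eq_of_mul_eq_zero {v : ι → A} (hv : ∀ i j, v i * v j = 0) (w : FreeRing ι) :
    lift v w = ((toTrivSqZeroExt w).fst : A) +
      Finsupp.linearCombination ℤ v (toTrivSqZeroExt w).snd := by
  let ψ : TrivSqZeroExt ℤ (ι →₀ ℤ) →ₐ[ℤ] A :=
    TrivSqZeroExt.liftEquivOfComm ⟨_, linearCombination_mul_linearCombination_eq_zero hv⟩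
  have h : lift v = (ψ : TrivSqZeroExt ℤ (ι →₀ ℤ) →+* A).comp toTrivSqZeroExt :=
    hom_ext fun i => by simp [ψ, toTrivSqZeroExt, lift_of]
  rw [h]
  simp [ψ, TrivSqZeroExt.lift_def]

theorem lift_add_add_lift_zero {v v' : ι → A} (hv : ∀ i j, v i * v j = 0)
    (hv' : ∀ i j, v' i * v' j = 0) (hvv' : ∀ i j, (v + v') i * (v + v') j = 0) (w : FreeRing ι) :
    lift (v + v') w + lift 0 w = lift v w + lift v' w := by
  rw [lift_eq_of_mul_eq_zero hv, lift_eq_of_mul_eq_zero hv', lift_eq_of_mul_eq_zero hvv',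
    lift_eq_of_mul_eq_zero (v := 0) (by simp)]
  simp only [Finsupp.linearCombination_apply, Finsupp.sum, Pi.add_apply, Pi.zero_apply, smul_add,
    smul_zero, Finset.sum_add_distrib, Finset.sum_const_zero]
  abel

end FreeRing

theorem union_of_axes_not_algebraic_of_square_zero
    (A : Type*) [Ring A] (a : A) (ha : a ≠ 0) (haa : a * a = 0) :
    ¬ ∃ T : Set (FreeRing (Fin 2)),
      {v : Fin 2 → A | v 0 = 0 ∨ v 1 = 0} =
        {v : Fin 2 → A | ∀ w ∈ T, FreeRing.lift v w = 0} := by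
  rintro ⟨T, hT⟩
  have hV : ∀ v : Fin 2 → A, v 0 = 0 ∨ v 1 = 0 → ∀ w ∈ T, FreeRing.lift v w = 0 :=
    fun v hv => (hT ▸ hv : v ∈ {v : Fin 2 → A | ∀ w ∈ T, FreeRing.lift v w = 0})
  have hdiag : ![a, a] ∈ {v : Fin 2 → A | ∀ w ∈ T, FreeRing.lift v w = 0} := by
    intro w hw
    have hsum := FreeRing.lift_add_add_lift_zero (v := ![a, 0]) (v' := ![0, a])
      (by simp [Fin.forall_fin_two, haa]) (by simp [Fin.forall_fin_two, haa])
      (by simp [Fin.forall_fin_two, haa]) w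
    rw [hV 0 (by simp) w hw, hV ![a, 0] (by simp) w hw, hV ![0, a] (by simp) w hw] at hsum
    simpa using hsum
  rw [← hT] at hdiag
  simp [ha] at hdiag
end

section
/- Let H be a group and a, b ∈ H. Then every element of the normal closure of {a} commutes with every element of the normal closure of {b} (i.e., ∀ x ∈ Subgroup.normalClosure {a}, ∀ y ∈ Subgroup.normalClosure {b}, x * y = y * x) if and only if ∀ g ∈ H, ⁅g⁻¹ * a * g, b⁆ = 1. -/
open scoped commutatorElement

namespace Subgroup

variable {G : Type*} [Group G]

theorem subset_centralizer_comm {s t : Set G} : s ⊆ centralizer t ↔ t ⊆ centralizer s :=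
  ⟨fun h x hx _ hy => (h hy x hx).symm, fun h x hx _ hy => (h hy x hx).symm⟩

/-- Goes through because the centralizer of the normal subgroup `normalClosure s` is normal. -/
theorem normalClosure_le_centralizer_normalClosure_iff {s t : Set G} :
    normalClosure s ≤ centralizer (normalClosure t) ↔ Group.conjugatesOfSet s ⊆ centralizer t := by
  rw [le_centralizer_iff, ← normalClosure_subset_iff, subset_centralizer_comm,
    SetLike.coe_subset_coe, normalClosure, closure_le]

end Subgroup

theorem Group.conjugatesOfSet_singleton_subset_iff {G : Type*} [Group G] {a : G} {s : Set G} :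
    Group.conjugatesOfSet {a} ⊆ s ↔ ∀ g : G, g⁻¹ * a * g ∈ s := by
  simp only [Set.subset_def, Group.mem_conjugatesOfSet_iff, Set.mem_singleton_iff, exists_eq_left,
    isConj_iff, forall_exists_index, forall_apply_eq_imp_iff]
  exact (Equiv.inv G).forall_congr (by simp)

theorem normalClosure_commute_iff_conj_commutator
    (H : Type*) [Group H] (a b : H) :
    (∀ x ∈ Subgroup.normalClosure {a}, ∀ y ∈ Subgroup.normalClosure {b}, x * y = y * x) ↔
    (∀ g : H, ⁅g⁻¹ * a * g, b⁆ = 1) := by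
  open Subgroup in
  calc _ ↔ normalClosure {a} ≤ centralizer (normalClosure {b}) :=
        forall₂_congr fun _ _ => forall₂_congr fun _ _ => eq_comm
    _ ↔ Group.conjugatesOfSet {a} ⊆ centralizer {b} :=
        normalClosure_le_centralizer_normalClosure_iff
    _ ↔ ∀ g : H, g⁻¹ * a * g ∈ centralizer {b} := Group.conjugatesOfSet_singleton_subset_iff
    _ ↔ _ := by
        simp only [mem_centralizer_iff_commutator_eq_one', Set.mem_singleton_iff, forall_eq]
end

section
/- Let G be a group. Then G is a domain — i.e., for all a, b ∈ G with a ≠ 1 and b ≠ 1, there exist x in the normal closure of {a} and y in the normal closure of {b} with x * y ≠ y * x — if and only if G is anticommutative, meaning: (1) for every normal subgroup N of G with N ≠ ⊥ there exist x, y ∈ N with x * y ≠ y * x (no nontrivial abelian normal subgroup), and (2) for all normal subgroups N, M of G with N ≠ ⊥ and M ≠ ⊥, N ⊓ M ≠ ⊥. -/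
/-!
A domain has no nontrivial abelian normal subgroup, since such a subgroup contains the normal
closure of each of its elements; and two normal subgroups meeting trivially commute elementwise,
so a domain has no such pair. Conversely, if `G` is anticommutative and `a, b ≠ 1`, then the
normal closures of `a` and `b` meet in a nontrivial normal subgroup, which is nonabelian.
-/

namespace Subgroup

variable {G : Type*} [Group G]

theorem normalClosure_singleton_ne_bot {a : G} (ha : a ≠ 1) : normalClosure {a} ≠ ⊥ := by
  simpa using ha

theorem Normal.exists_normalClosure_singleton_le {N : Subgroup G} (hN : N.Normal) (hN1 : N ≠ ⊥) :
    ∃ a : G, a ≠ 1 ∧ normalClosure {a} ≤ N := by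
  obtain ⟨a, haN, ha⟩ := N.bot_or_exists_ne_one.resolve_left hN1
  exact ⟨a, ha, normalClosure_le_normal (Set.singleton_subset_iff.mpr haN)⟩

end Subgroup

open Subgroup

theorem group_domain_iff_anticommutative
    (G : Type*) [Group G] :
    (∀ a b : G, a ≠ 1 → b ≠ 1 →
      ∃ x ∈ Subgroup.normalClosure {a}, ∃ y ∈ Subgroup.normalClosure {b}, x * y ≠ y * x) ↔
    ((∀ N : Subgroup G, N.Normal → N ≠ ⊥ → ∃ x ∈ N, ∃ y ∈ N, x * y ≠ y * x) ∧
      (∀ N M : Subgroup G, N.Normal → M.Normal → N ≠ ⊥ → M ≠ ⊥ → N ⊓ M ≠ ⊥)) := by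
  constructor
  · intro hdomain
    refine ⟨fun N hN hN1 => ?_, fun N M hN hM hN1 hM1 hNM => ?_⟩
    · obtain ⟨a, ha, haN⟩ := hN.exists_normalClosure_singleton_le hN1
      obtain ⟨x, hx, y, hy, hxy⟩ := hdomain a a ha ha
      exact ⟨x, haN hx, y, haN hy, hxy⟩
    · obtain ⟨a, ha, haN⟩ := hN.exists_normalClosure_singleton_le hN1
      obtain ⟨b, hb, hbM⟩ := hM.exists_normalClosure_singleton_le hM1
      obtain ⟨x, hx, y, hy, hxy⟩ := hdomain a b ha hb
      exact hxy <| commute_of_normal_of_disjoint N M hN hM (disjoint_iff.mpr hNM) x y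
        (haN hx) (hbM hy)
  · rintro ⟨hnonabelian, hinf⟩ a b ha hb
    have hab : normalClosure {a} ⊓ normalClosure {b} ≠ ⊥ :=
      hinf _ _ normalClosure_normal normalClosure_normal
        (normalClosure_singleton_ne_bot ha) (normalClosure_singleton_ne_bot hb)
    obtain ⟨x, hx, y, hy, hxy⟩ := hnonabelian _ (normal_inf_normal _ _) hab
    exact ⟨x, hx.1, y, hy.2, hxy⟩
end

section
/- Let K be a commutative ring and L a Lie algebra over K. Then L is a domain — i.e., for all a, b ∈ L with a ≠ 0 and b ≠ 0, the bracket of Lie ideals ⁅I(a), I(b)⁆ ≠ ⊥, where I(a) and I(b) are the Lie ideals of L generated by a and b respectively — if and only if L is anticommutative, meaning: (1) every Lie ideal I of L with I ≠ ⊥ satisfies ⁅I, I⁆ ≠ ⊥ (no nonzero abelian ideal), and (2) for all Lie ideals I, J of L with I ≠ ⊥ and J ≠ ⊥, I ⊓ J ≠ ⊥. -/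
/-!
Both sides say that any two nonzero Lie ideals have nonzero bracket: every nonzero ideal contains
the ideal generated by one of its nonzero elements, `⁅I, J⁆ ≤ I ⊓ J`, and `⁅I ⊓ J, I ⊓ J⁆ ≤ ⁅I, J⁆`.
-/

namespace LieSubmodule

variable {R L M : Type*} [CommRing R] [LieRing L] [AddCommGroup M] [Module R M]
  [LieRingModule L M]

theorem lieSpan_singleton_ne_bot {m : M} (hm : m ≠ 0) : lieSpan R L {m} ≠ ⊥ := by
  simpa only [ne_eq, lieSpan_eq_bot_iff, Set.mem_singleton_iff, forall_eq] using hm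

theorem exists_lieSpan_singleton_le_of_ne_bot {N : LieSubmodule R L M} (hN : N ≠ ⊥) :
    ∃ m ≠ 0, lieSpan R L {m} ≤ N := by
  obtain ⟨m, hmN, hm⟩ := (Submodule.ne_bot_iff N.toSubmodule).mp (by simpa using hN)
  exact ⟨m, hm, lieSpan_le.mpr (Set.singleton_subset_iff.mpr hmN)⟩

end LieSubmodule

namespace LieIdeal

open LieSubmodule

variable {K L : Type*} [CommRing K] [LieRing L] [LieAlgebra K L]

theorem lie_ne_bot_of_lie_lieSpan_singleton_ne_bot
    (h : ∀ a b : L, a ≠ 0 → b ≠ 0 →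
      ⁅(lieSpan K L {a} : LieIdeal K L), (lieSpan K L {b} : LieIdeal K L)⁆ ≠ ⊥)
    {I J : LieIdeal K L} (hI : I ≠ ⊥) (hJ : J ≠ ⊥) : ⁅I, J⁆ ≠ ⊥ := by
  obtain ⟨a, ha, haI⟩ := exists_lieSpan_singleton_le_of_ne_bot hI
  obtain ⟨b, hb, hbJ⟩ := exists_lieSpan_singleton_le_of_ne_bot hJ
  exact ne_bot_of_le_ne_bot (h a b ha hb) (mono_lie haI hbJ)

theorem lie_ne_bot_of_lie_self_ne_bot_of_inf_ne_bot
    (h_lie_self : ∀ I : LieIdeal K L, I ≠ ⊥ → ⁅I, I⁆ ≠ ⊥)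
    (h_inf : ∀ I J : LieIdeal K L, I ≠ ⊥ → J ≠ ⊥ → I ⊓ J ≠ ⊥)
    {I J : LieIdeal K L} (hI : I ≠ ⊥) (hJ : J ≠ ⊥) : ⁅I, J⁆ ≠ ⊥ :=
  ne_bot_of_le_ne_bot (h_lie_self _ (h_inf I J hI hJ)) (mono_lie inf_le_left inf_le_right)

end LieIdeal

open LieSubmodule LieIdeal

theorem lie_algebra_domain_iff_anticommutative
    (K : Type*) (L : Type*) [CommRing K] [LieRing L] [LieAlgebra K L] :
    (∀ a b : L, a ≠ 0 → b ≠ 0 →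
      ⁅(LieSubmodule.lieSpan K L {a} : LieIdeal K L),
        (LieSubmodule.lieSpan K L {b} : LieIdeal K L)⁆ ≠ (⊥ : LieIdeal K L)) ↔
    ((∀ I : LieIdeal K L, I ≠ ⊥ → ⁅I, I⁆ ≠ (⊥ : LieIdeal K L)) ∧
      (∀ I J : LieIdeal K L, I ≠ ⊥ → J ≠ ⊥ → I ⊓ J ≠ ⊥)) := by
  constructor
  · intro h
    refine ⟨fun I hI ↦ lie_ne_bot_of_lie_lieSpan_singleton_ne_bot h hI hI, fun I J hI hJ ↦ ?_⟩
    exact ne_bot_of_le_ne_bot (lie_ne_bot_of_lie_lieSpan_singleton_ne_bot h hI hJ) (lie_le_inf I J)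
  · rintro ⟨h_lie_self, h_inf⟩ a b ha hb
    exact lie_ne_bot_of_lie_self_ne_bot_of_inf_ne_bot h_lie_self h_inf
      (lieSpan_singleton_ne_bot ha) (lieSpan_singleton_ne_bot hb)
end

section
/- Let A be a (not necessarily unital) associative ring. Then A is a domain — i.e., for all a, b ∈ A with a ≠ 0 and b ≠ 0, there exist x in the two-sided ideal generated by a and y in the two-sided ideal generated by b with x * y ≠ 0 or y * x ≠ 0 — if and only if A is anticommutative, meaning: (1) for every two-sided ideal I of A with I ≠ ⊥ there exist x, y ∈ I with x * y ≠ 0 (no nonzero ideal with zero multiplication), and (2) for all two-sided ideals I, J of A with I ≠ ⊥ and J ≠ ⊥, I ⊓ J ≠ ⊥. -/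
/-!
Both conditions are statements about products of elements of nonzero ideals, and every nonzero
ideal contains a nonzero principal one. Conversely, for `a, b ≠ 0` the ideal
`span {a} ⊓ span {b}` is nonzero by (2), so (1) gives `x, y` in it with `x * y ≠ 0`.
-/

namespace TwoSidedIdeal

variable {R : Type*} [NonUnitalNonAssocRing R]

lemma ne_bot_iff_exists_ne_zero {I : TwoSidedIdeal R} : I ≠ ⊥ ↔ ∃ x ∈ I, x ≠ 0 := by
  rw [Ne, eq_bot_iff]
  simp only [SetLike.le_def, mem_bot, not_forall, exists_prop]

lemma span_singleton_le_iff_mem {a : R} {I : TwoSidedIdeal R} : span {a} ≤ I ↔ a ∈ I := by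
  rw [span_le, Set.singleton_subset_iff, SetLike.mem_coe]

lemma span_singleton_ne_bot {a : R} (ha : a ≠ 0) : span {a} ≠ ⊥ :=
  ne_bot_iff_exists_ne_zero.2 ⟨a, subset_span rfl, ha⟩

lemma mul_mem_inf {I J : TwoSidedIdeal R} {x y : R} (hx : x ∈ I) (hy : y ∈ J) :
    x * y ∈ I ⊓ J :=
  (mem_inf _).2 ⟨I.mul_mem_right x y hx, J.mul_mem_left x y hy⟩

lemma inf_ne_bot_of_mul_ne_zero {I J : TwoSidedIdeal R} {x y : R} (hx : x ∈ I) (hy : y ∈ J)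
    (hxy : x * y ≠ 0 ∨ y * x ≠ 0) : I ⊓ J ≠ ⊥ := by
  rw [ne_bot_iff_exists_ne_zero]
  rcases hxy with hxy | hyx
  · exact ⟨x * y, mul_mem_inf hx hy, hxy⟩
  · exact ⟨y * x, inf_comm I J ▸ mul_mem_inf hy hx, hyx⟩

end TwoSidedIdeal

open TwoSidedIdeal

theorem nonunital_ring_domain_iff_anticommutative
    (A : Type*) [NonUnitalRing A] :
    (∀ a b : A, a ≠ 0 → b ≠ 0 →
      ∃ x ∈ TwoSidedIdeal.span {a}, ∃ y ∈ TwoSidedIdeal.span {b},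
        x * y ≠ 0 ∨ y * x ≠ 0) ↔
    ((∀ I : TwoSidedIdeal A, I ≠ ⊥ → ∃ x ∈ I, ∃ y ∈ I, x * y ≠ 0) ∧
      (∀ I J : TwoSidedIdeal A, I ≠ ⊥ → J ≠ ⊥ → I ⊓ J ≠ ⊥)) := by
  constructor
  · intro hdomain
    have exists_mul_ne_zero {I J : TwoSidedIdeal A} (hI : I ≠ ⊥) (hJ : J ≠ ⊥) :
        ∃ x ∈ I, ∃ y ∈ J, x * y ≠ 0 ∨ y * x ≠ 0 := by
      obtain ⟨a, haI, ha⟩ := ne_bot_iff_exists_ne_zero.1 hI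
      obtain ⟨b, hbJ, hb⟩ := ne_bot_iff_exists_ne_zero.1 hJ
      obtain ⟨x, hx, y, hy, hxy⟩ := hdomain a b ha hb
      exact ⟨x, span_singleton_le_iff_mem.2 haI hx, y, span_singleton_le_iff_mem.2 hbJ hy, hxy⟩
    refine ⟨fun I hI => ?_, fun I J hI hJ => ?_⟩
    · obtain ⟨x, hx, y, hy, hxy | hyx⟩ := exists_mul_ne_zero hI hI
      exacts [⟨x, hx, y, hy, hxy⟩, ⟨y, hy, x, hx, hyx⟩]
    · obtain ⟨x, hx, y, hy, hxy⟩ := exists_mul_ne_zero hI hJ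
      exact inf_ne_bot_of_mul_ne_zero hx hy hxy
  · rintro ⟨hnot_square_zero, hinf_ne_bot⟩ a b ha hb
    obtain ⟨x, hx, y, hy, hxy⟩ := hnot_square_zero _
      (hinf_ne_bot _ _ (span_singleton_ne_bot ha) (span_singleton_ne_bot hb))
    exact ⟨x, ((mem_inf _).1 hx).1, y, ((mem_inf _).1 hy).2, Or.inl hxy⟩
end

section
/- Let K be a commutative ring, L a Lie algebra over K, and A, B Lie subalgebras of L with ⁅a, b⁆ = 0 for all a ∈ A and b ∈ B. Let I, J be index types and v : I ⊕ J → L a map with v (inl i) ∈ A for all i ∈ I and v (inr j) ∈ B for all j ∈ J. Define v₁ : I ⊕ J → L by v₁ (inl i) = v (inl i) and v₁ (inr j) = 0, and v₂ by v₂ (inl i) = 0 and v₂ (inr j) = v (inr j). Then for every f ∈ FreeLieAlgebra K (I ⊕ J): FreeLieAlgebra.lift K v f = FreeLieAlgebra.lift K v₁ f + FreeLieAlgebra.lift K v₂ f. -/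
/-!
Since `[A, B] = 0`, the sum of two Lie homomorphisms with values in `A` and in `B` respectively is
again a Lie homomorphism: the cross terms of `⁅φ x + ψ x, φ y + ψ y⁆` vanish. The lifts of `v₁` and
`v₂` land in `A` and `B`, and their sum agrees with `lift v` on generators, so the two coincide by
the universal property.
-/

namespace LieHom

variable {R L₁ L₂ : Type*} [CommRing R] [LieRing L₁] [LieAlgebra R L₁] [LieRing L₂]
  [LieAlgebra R L₂]

def addOfLieEqZero (φ ψ : L₁ →ₗ⁅R⁆ L₂) (h : ∀ x y, ⁅φ x, ψ y⁆ = 0) : L₁ →ₗ⁅R⁆ L₂ where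
  toLinearMap := φ.toLinearMap + ψ.toLinearMap
  map_lie' {x y} := by
    have hψφ : ⁅ψ x, φ y⁆ = 0 := by rw [← lie_skew, h, neg_zero]
    change φ ⁅x, y⁆ + ψ ⁅x, y⁆ = ⁅φ x + ψ x, φ y + ψ y⁆
    rw [map_lie, map_lie, add_lie, lie_add, lie_add, h, hψφ]
    abel

@[simp]
theorem addOfLieEqZero_apply (φ ψ : L₁ →ₗ⁅R⁆ L₂) (h : ∀ x y, ⁅φ x, ψ y⁆ = 0) (x : L₁) :
    addOfLieEqZero φ ψ h x = φ x + ψ x :=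
  rfl

end LieHom

namespace FreeLieAlgebra

variable {R X L : Type*} [CommRing R] [LieRing L] [LieAlgebra R L]

theorem lift_apply_mem {A : LieSubalgebra R L} {u : X → L} (hu : ∀ x, u x ∈ A)
    (f : FreeLieAlgebra R X) : lift R u f ∈ A := by
  have hcomp : A.incl.comp (lift R fun x ↦ (⟨u x, hu x⟩ : A)) = lift R u := by
    ext x
    simp [lift_of_apply]
  rw [← hcomp]
  exact (lift R (fun x ↦ (⟨u x, hu x⟩ : A)) f).2

theorem lift_add_of_commuting_subalgebras {A B : LieSubalgebra R L}
    (hAB : ∀ a ∈ A, ∀ b ∈ B, ⁅a, b⁆ = (0 : L)) {u₁ u₂ : X → L} (hu₁ : ∀ x, u₁ x ∈ A)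
    (hu₂ : ∀ x, u₂ x ∈ B) (f : FreeLieAlgebra R X) :
    lift R (u₁ + u₂) f = lift R u₁ f + lift R u₂ f := by
  have hcomm : ∀ x y, ⁅lift R u₁ x, lift R u₂ y⁆ = 0 := fun x y ↦
    hAB _ (lift_apply_mem hu₁ x) _ (lift_apply_mem hu₂ y)
  have hsum : (lift R u₁).addOfLieEqZero (lift R u₂) hcomm = lift R (u₁ + u₂) := by
    ext x
    simp [lift_of_apply]
  rw [← hsum, LieHom.addOfLieEqZero_apply]

end FreeLieAlgebra

theorem freeLieAlgebra_lift_split_of_commuting_subalgebras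
    (K : Type*) (L : Type*) [CommRing K] [LieRing L] [LieAlgebra K L]
    (A B : LieSubalgebra K L)
    (hAB : ∀ a ∈ A, ∀ b ∈ B, ⁅a, b⁆ = (0 : L))
    (I J : Type*) (v : I ⊕ J → L)
    (hvA : ∀ i : I, v (Sum.inl i) ∈ A) (hvB : ∀ j : J, v (Sum.inr j) ∈ B)
    (v₁ v₂ : I ⊕ J → L)
    (hv₁l : ∀ i : I, v₁ (Sum.inl i) = v (Sum.inl i))
    (hv₁r : ∀ j : J, v₁ (Sum.inr j) = 0)
    (hv₂l : ∀ i : I, v₂ (Sum.inl i) = 0)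
    (hv₂r : ∀ j : J, v₂ (Sum.inr j) = v (Sum.inr j))
    (f : FreeLieAlgebra K (I ⊕ J)) :
    FreeLieAlgebra.lift K v f =
      FreeLieAlgebra.lift K v₁ f + FreeLieAlgebra.lift K v₂ f := by
  have hv₁A : ∀ x, v₁ x ∈ A := by
    rintro (i | j)
    · exact hv₁l i ▸ hvA i
    · exact hv₁r j ▸ A.zero_mem
  have hv₂B : ∀ x, v₂ x ∈ B := by
    rintro (i | j)
    · exact hv₂l i ▸ B.zero_mem
    · exact hv₂r j ▸ hvB j
  have hv : v = v₁ + v₂ := by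
    funext x
    rcases x with i | j <;> simp [hv₁l, hv₁r, hv₂l, hv₂r]
  rw [hv]
  exact FreeLieAlgebra.lift_add_of_commuting_subalgebras hAB hv₁A hv₂B f
end

section
/- Let X be a type with at least two distinct elements. Then every nontrivial normal subgroup of the free group FreeGroup X is nonabelian: if N is a subgroup of FreeGroup X with N.Normal and N ≠ ⊥, then there exist u, v ∈ N with u * v ≠ v * u. -/
namespace FGaux

variable {X : Type*}

/-- A word satisfying the no-cancellation chain condition is its own reduction. -/
lemma reduce_eq_self_of_chain' [DecidableEq X] (L : List (X × Bool))
    (h : L.Chain' (fun a b => b ≠ (a.1, !a.2))) : FreeGroup.reduce L = L := by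
  induction L with
  | nil => simp
  | cons a L ih =>
    rw [FreeGroup.reduce.cons, ih h.tail]
    cases L with
    | nil => rfl
    | cons b M =>
      have hab : b ≠ (a.1, !a.2) := (List.isChain_cons_cons.mp h).1
      show (if a.1 = b.1 ∧ a.2 = !b.2 then M else a :: b :: M) = a :: b :: M
      rw [if_neg]
      rintro ⟨h1, h2⟩
      exact hab (by apply Prod.ext <;> simp [h1, h2])

/-- Reductions satisfy the no-cancellation chain condition. -/
lemma chain'_reduce [DecidableEq X] (L : List (X × Bool)) :
    (FreeGroup.reduce L).Chain' (fun a b => b ≠ (a.1, !a.2)) := by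
  induction L with
  | nil => exact List.isChain_nil
  | cons a L ih =>
    rw [FreeGroup.reduce.cons]
    rcases hL : FreeGroup.reduce L with _ | ⟨b, M⟩
    · exact List.isChain_singleton _
    · rw [hL] at ih
      show List.Chain' _ (if a.1 = b.1 ∧ a.2 = !b.2 then M else a :: b :: M)
      by_cases hc : a.1 = b.1 ∧ a.2 = !b.2
      · rw [if_pos hc]; exact ih.tail
      · rw [if_neg hc]
        refine List.isChain_cons_cons.mpr ⟨?_, ih⟩
        rintro rfl
        exact hc ⟨rfl, by simp⟩

lemma chain'_toWord [DecidableEq X] (w : FreeGroup X) :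
    w.toWord.Chain' (fun a b => b ≠ (a.1, !a.2)) := by
  rw [← FreeGroup.reduce_toWord]; exact chain'_reduce _

lemma exists_avoid [DecidableEq X] (x y : X) (hxy : x ≠ y) (a b c : X × Bool) :
    ∃ s : X × Bool, s ≠ a ∧ s ≠ b ∧ s ≠ c := by
  by_contra hcon
  push_neg at hcon
  have key : ∀ s : X × Bool, s = a ∨ s = b ∨ s = c := by
    intro s
    rcases eq_or_ne s a with h | h
    · exact Or.inl h
    rcases eq_or_ne s b with h' | h'
    · exact Or.inr (Or.inl h')
    · exact Or.inr (Or.inr (hcon s h h'))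
  have hsub : ({(x, true), (x, false), (y, true), (y, false)} : Finset (X × Bool)) ⊆ {a, b, c} := by
    intro s _
    rcases key s with h | h | h <;> simp [h]
  have hcardT : ({(x, true), (x, false), (y, true), (y, false)} : Finset (X × Bool)).card = 4 := by
    rw [Finset.card_insert_of_notMem (by simp [hxy]),
      Finset.card_insert_of_notMem (by simp [hxy]),
      Finset.card_insert_of_notMem (by simp), Finset.card_singleton]
  have hbc : ({b, c} : Finset (X × Bool)).card ≤ 2 :=
    le_trans (Finset.card_insert_le _ _) (by simp)
  have hcardS : ({a, b, c} : Finset (X × Bool)).card ≤ 3 :=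
    le_trans (Finset.card_insert_le _ _) (by omega)
  have := Finset.card_le_card hsub
  omega

lemma chain'_append_of {α : Type*} {R : α → α → Prop} {l₁ l₂ : List α}
    (hc₁ : l₁.Chain' R) (hc₂ : l₂.Chain' R) (h1 : l₁ ≠ []) (h2 : l₂ ≠ [])
    (hR : R (l₁.getLast h1) (l₂.head h2)) : (l₁ ++ l₂).Chain' R := by
  refine List.isChain_append.mpr ⟨hc₁, hc₂, ?_⟩
  intro a ha b hb
  rw [List.getLast?_eq_getLast h1] at ha
  rw [List.head?_eq_head h2] at hb
  obtain rfl : a = l₁.getLast h1 := by injection ha.symm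
  obtain rfl : b = l₂.head h2 := by injection hb.symm
  exact hR

end FGaux

theorem freeGroup_nontrivial_normal_subgroup_nonabelian
    (X : Type*) (x y : X) (hxy : x ≠ y)
    (N : Subgroup (FreeGroup X)) (hN : N.Normal) (hbot : N ≠ ⊥) :
    ∃ u ∈ N, ∃ v ∈ N, u * v ≠ v * u := by
  classical
  obtain ⟨⟨w, hwN⟩, hw1⟩ := Subgroup.ne_bot_iff_exists_ne_one.mp hbot
  have hw1 : w ≠ 1 := by simpa [Subtype.ext_iff] using hw1
  set L := w.toWord with hLdef
  have hL : L ≠ [] := fun hnil => hw1 (FreeGroup.toWord_eq_nil_iff.mp hnil)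
  set h := L.head hL with hhdef
  set l := L.getLast hL with hldef
  obtain ⟨p, hp1, hp2, -⟩ := FGaux.exists_avoid x y hxy h (l.1, !l.2) h
  obtain ⟨q, hq1, hq2, hq3⟩ := FGaux.exists_avoid x y hxy (h.1, !h.2) l (p.1, !p.2)
  set ip : X × Bool := (p.1, !p.2) with hipdef
  set iq : X × Bool := (q.1, !q.2) with hiqdef
  set t : FreeGroup X := FreeGroup.mk [p, q] with htdef
  refine ⟨w, hwN, t * w * t⁻¹, hN.conj_mem w hwN t, ?_⟩
  set R : (X × Bool) → (X × Bool) → Prop := fun a b => b ≠ (a.1, !a.2) with hRdef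
  -- basic relation facts
  have hiq2 : (iq.1, !iq.2) = q := by rw [hiqdef]; simp
  have hip2 : (ip.1, !ip.2) = p := by rw [hipdef]; simp
  have hRlp : R l p := hp2
  have hRpq : R p q := hq3
  have hRqh : R q h := fun hc => hq1 (by rw [hc]; simp [hiqdef])
  have hRliq : R l iq := by
    intro hc
    rw [hiqdef, Prod.mk.injEq] at hc
    exact hq2 (Prod.ext hc.1 (by simpa using hc.2))
  have hRiqip : R iq ip := by
    show ip ≠ (iq.1, !iq.2)
    rw [hiq2]
    exact fun hc => hq3 hc.symm
  have hRiph : R ip h := by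
    show h ≠ (ip.1, !ip.2)
    rw [hip2]
    exact fun hc => hp1 hc.symm
  -- chain conditions
  have hchL : L.Chain' R := FGaux.chain'_toWord w
  have hch1 : ([p, q] : List (X × Bool)).Chain' R := List.isChain_pair.mpr hRpq
  have hch2 : ([iq, ip] : List (X × Bool)).Chain' R := List.isChain_pair.mpr hRiqip
  -- building blocks
  have hDne : (L ++ [iq, ip]) ≠ [] := by simp [hL]
  have hchD : (L ++ [iq, ip]).Chain' R :=
    FGaux.chain'_append_of hchL hch2 hL (by simp) (by simpa using hRliq)
  have hheadD : (L ++ [iq, ip]).head hDne = h := List.head_append_of_ne_nil hL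
  have hlastD : (L ++ [iq, ip]).getLast hDne = ip := by
    rw [List.getLast_append_of_ne_nil (l' := [iq, ip]) _ (by simp)]
    rfl
  -- word A : L ++ [p,q] ++ (L ++ [iq,ip])
  have hchE : (([p, q] : List (X × Bool)) ++ (L ++ [iq, ip])).Chain' R := by
    refine FGaux.chain'_append_of hch1 hchD (by simp) hDne ?_
    rw [hheadD]
    exact hRqh
  have hchA : (L ++ (([p, q] : List (X × Bool)) ++ (L ++ [iq, ip]))).Chain' R := by
    refine FGaux.chain'_append_of hchL hchE hL (by simp) ?_
    have : (([p, q] : List (X × Bool)) ++ (L ++ [iq, ip])).head (by simp) = p := rfl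
    rw [this]
    exact hRlp
  -- word B : [p,q] ++ (L ++ ([iq,ip] ++ L))
  have hFne : (([iq, ip] : List (X × Bool)) ++ L) ≠ [] := by simp
  have hchF : (([iq, ip] : List (X × Bool)) ++ L).Chain' R := by
    refine FGaux.chain'_append_of hch2 hchL (by simp) hL ?_
    have : ([iq, ip] : List (X × Bool)).getLast (by simp) = ip := rfl
    rw [this]
    exact hRiph
  have hchG : (L ++ (([iq, ip] : List (X × Bool)) ++ L)).Chain' R := by
    refine FGaux.chain'_append_of hchL hchF hL hFne ?_
    have : (([iq, ip] : List (X × Bool)) ++ L).head hFne = iq := rfl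
    rw [this]
    exact hRliq
  have hchB : (([p, q] : List (X × Bool)) ++ (L ++ (([iq, ip] : List (X × Bool)) ++ L))).Chain' R := by
    refine FGaux.chain'_append_of hch1 hchG (by simp) (by simp [hL]) ?_
    have : (L ++ (([iq, ip] : List (X × Bool)) ++ L)).head (by simp [hL]) = h :=
      List.head_append_of_ne_nil hL
    rw [this]
    exact hRqh
  -- the two products as explicit words
  have hwmk : w = FreeGroup.mk L := (FreeGroup.mk_toWord).symm
  have hinvRev : FreeGroup.invRev [p, q] = [iq, ip] := by
    simp [FreeGroup.invRev, hipdef, hiqdef]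
  have hA : w * (t * w * t⁻¹) = FreeGroup.mk (L ++ ([p, q] ++ (L ++ [iq, ip]))) := by
    rw [hwmk, htdef, FreeGroup.inv_mk, hinvRev]
    simp only [FreeGroup.mul_mk, List.append_assoc]
  have hB : (t * w * t⁻¹) * w = FreeGroup.mk ([p, q] ++ (L ++ ([iq, ip] ++ L))) := by
    rw [hwmk, htdef, FreeGroup.inv_mk, hinvRev]
    simp only [FreeGroup.mul_mk, List.append_assoc]
  -- conclude
  intro heq
  rw [hA, hB] at heq
  have hwords := congrArg FreeGroup.toWord heq
  rw [FreeGroup.toWord_mk, FreeGroup.toWord_mk,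
    FGaux.reduce_eq_self_of_chain' _ hchA, FGaux.reduce_eq_self_of_chain' _ hchB] at hwords
  have hcons : L = h :: L.tail := (List.cons_head_tail hL).symm
  rw [hcons] at hwords
  simp only [List.cons_append, List.cons.injEq] at hwords
  exact hp1 hwords.1.symm
end

section
/- Let X be a type. Then any two nontrivial normal subgroups of the free group FreeGroup X have nontrivial intersection: if N, M are subgroups of FreeGroup X with N.Normal, M.Normal, N ≠ ⊥ and M ≠ ⊥, then N ⊓ M ≠ ⊥. -/
/-!
Pick `n ≠ 1` in `N` and `m ≠ 1` in `M`. If they do not commute, their commutator is a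
nontrivial element of `N ⊓ M`. If they commute, the subgroup they generate is free
(Nielsen–Schreier) and abelian, hence cyclic; as free groups are torsion-free, `n` and `m`
then have a common nontrivial power `n ^ a = m ^ b`.
-/

open scoped commutatorElement

theorem IsCyclic.exists_zpow_eq_zpow_ne_one {G : Type*} [Group G] [IsCyclic G]
    [IsMulTorsionFree G] {n m : G} (hn : n ≠ 1) (hm : m ≠ 1) :
    ∃ a b : ℤ, n ^ a = m ^ b ∧ n ^ a ≠ 1 := by
  obtain ⟨g, hg⟩ := exists_zpow_surjective G
  obtain ⟨i, rfl⟩ := hg n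
  obtain ⟨j, rfl⟩ := hg m
  have hg1 : g ≠ 1 := by rintro rfl; simp at hn
  have hi : i ≠ 0 := by rintro rfl; simp at hn
  have hj : j ≠ 0 := by rintro rfl; simp at hm
  refine ⟨j, i, by rw [← zpow_mul, ← zpow_mul, mul_comm], ?_⟩
  rw [← zpow_mul, Ne, IsMulTorsionFree.zpow_eq_one_iff_right hg1]
  exact mul_ne_zero hi hj

theorem IsFreeGroup.subsingleton_generators (G : Type*) [Group G] [IsFreeGroup G]
    [IsMulCommutative G] : Subsingleton (IsFreeGroup.Generators G) := by
  classical
  refine ⟨fun a b => by_contra fun hab => ?_⟩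
  -- two distinct generators would map to the non-commuting transpositions (0 1) and (1 2)
  let σ : IsFreeGroup.Generators G → Equiv.Perm (Fin 3) :=
    fun x => if x = a then Equiv.swap 0 1 else Equiv.swap 1 2
  have hcomm := congrArg (IsFreeGroup.lift σ)
    (mul_comm' (IsFreeGroup.of a : G) (IsFreeGroup.of b))
  simp only [map_mul, IsFreeGroup.lift_of, σ, if_neg (Ne.symm hab)] at hcomm
  exact absurd hcomm (by decide)

instance IsFreeGroup.isCyclic_of_isMulCommutative {G : Type*} [Group G] [IsFreeGroup G]
    [IsMulCommutative G] : IsCyclic G := by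
  have := IsFreeGroup.subsingleton_generators G
  have : IsCyclic (FreeGroup (IsFreeGroup.Generators G)) := by
    cases isEmpty_or_nonempty (IsFreeGroup.Generators G)
    · infer_instance
    · have := uniqueOfSubsingleton (Classical.arbitrary (IsFreeGroup.Generators G))
      infer_instance
  exact (IsFreeGroup.toFreeGroup G).symm.isCyclic.mp this

theorem FreeGroup.exists_zpow_eq_zpow_ne_one_of_commute {X : Type*} {n m : FreeGroup X}
    (h : Commute n m) (hn : n ≠ 1) (hm : m ≠ 1) :
    ∃ a b : ℤ, n ^ a = m ^ b ∧ n ^ a ≠ 1 := by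
  let H := Subgroup.closure ({n, m} : Set (FreeGroup X))
  have : IsMulCommutative H := Subgroup.isMulCommutative_closure (by
    rintro x (rfl | rfl) y (rfl | rfl) <;> first | rfl | exact h.eq | exact h.eq.symm)
  obtain ⟨a, b, hab, hne⟩ := IsCyclic.exists_zpow_eq_zpow_ne_one (G := H)
    (n := ⟨n, Subgroup.subset_closure (by simp)⟩) (m := ⟨m, Subgroup.subset_closure (by simp)⟩)
    (by simpa [Subtype.ext_iff] using hn) (by simpa [Subtype.ext_iff] using hm)
  exact ⟨a, b, congrArg Subtype.val hab, by simpa [Subtype.ext_iff] using hne⟩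

theorem freeGroup_nontrivial_normal_subgroups_inf_ne_bot
    (X : Type*) (N M : Subgroup (FreeGroup X))
    (hN : N.Normal) (hM : M.Normal) (hNbot : N ≠ ⊥) (hMbot : M ≠ ⊥) :
    N ⊓ M ≠ ⊥ := by
  obtain ⟨n, hnN, hn⟩ := N.bot_or_exists_ne_one.resolve_left hNbot
  obtain ⟨m, hmM, hm⟩ := M.bot_or_exists_ne_one.resolve_left hMbot
  suffices ∃ x ∈ N ⊓ M, x ≠ 1 by
    obtain ⟨x, hx, hx1⟩ := this
    exact fun hbot => hx1 (Subgroup.mem_bot.mp (hbot ▸ hx))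
  by_cases hnm : Commute n m
  · obtain ⟨a, b, hab, hne⟩ := FreeGroup.exists_zpow_eq_zpow_ne_one_of_commute hnm hn hm
    exact ⟨n ^ a, ⟨N.zpow_mem hnN a, hab ▸ M.zpow_mem hmM b⟩, hne⟩
  · exact ⟨⁅n, m⁆, Subgroup.commutator_le_inf N M (Subgroup.commutator_mem_commutator hnN hmM),
      mt commutatorElement_eq_one_iff_commute.mp hnm⟩
end

section
/- Let K be a field and X a type. Then the free associative algebra FreeAlgebra K X is anticommutative: (1) for every two-sided ideal I of FreeAlgebra K X with I ≠ ⊥ there exist x, y ∈ I with x * y ≠ 0, and (2) for all two-sided ideals I, J of FreeAlgebra K X with I ≠ ⊥ and J ≠ ⊥, I ⊓ J ≠ ⊥. -/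
/-! The free algebra over a field has no zero divisors, and in a ring without zero divisors
nonzero `x ∈ I` and `y ∈ J` give the nonzero element `x * y` of `I ⊓ J`. -/

namespace TwoSidedIdeal

variable {R : Type*} [NonUnitalNonAssocRing R]

theorem exists_mem_ne_zero_of_ne_bot {I : TwoSidedIdeal R} (hI : I ≠ ⊥) : ∃ x ∈ I, x ≠ 0 := by
  by_contra! h
  exact hI <| eq_bot_iff.2 fun x hx => (mem_bot R).2 (h x hx)

variable [NoZeroDivisors R]

theorem exists_mul_ne_zero_of_ne_bot {I : TwoSidedIdeal R} (hI : I ≠ ⊥) :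
    ∃ x ∈ I, ∃ y ∈ I, x * y ≠ 0 := by
  obtain ⟨x, hxI, hx⟩ := exists_mem_ne_zero_of_ne_bot hI
  exact ⟨x, hxI, x, hxI, mul_ne_zero hx hx⟩

theorem inf_ne_bot_of_ne_bot {I J : TwoSidedIdeal R} (hI : I ≠ ⊥) (hJ : J ≠ ⊥) : I ⊓ J ≠ ⊥ := by
  obtain ⟨x, hxI, hx⟩ := exists_mem_ne_zero_of_ne_bot hI
  obtain ⟨y, hyJ, hy⟩ := exists_mem_ne_zero_of_ne_bot hJ
  intro h
  have hxy : x * y ∈ I ⊓ J := ⟨I.mul_mem_right _ _ hxI, J.mul_mem_left _ _ hyJ⟩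
  exact mul_ne_zero hx hy ((mem_bot R).1 (h ▸ hxy))

end TwoSidedIdeal

theorem freeAlgebra_anticommutative
    (K : Type*) (X : Type*) [Field K] :
    (∀ I : TwoSidedIdeal (FreeAlgebra K X), I ≠ ⊥ → ∃ x ∈ I, ∃ y ∈ I, x * y ≠ 0) ∧
    (∀ I J : TwoSidedIdeal (FreeAlgebra K X), I ≠ ⊥ → J ≠ ⊥ → I ⊓ J ≠ ⊥) :=
  ⟨fun _ => TwoSidedIdeal.exists_mul_ne_zero_of_ne_bot,
    fun _ _ => TwoSidedIdeal.inf_ne_bot_of_ne_bot⟩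
end
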